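/- For every integer m, the group with presentation on six generators a₁, b₁, a₂, b₂, c, d with relators a₁⁻¹[b₁⁻¹,d⁻¹], b₁⁻¹[a₁⁻¹,d], c⁻¹[b₂⁻¹,d⁻¹], d·[c⁻¹,b₂]^m, [a₁,c], [b₁,c], [a₂,c], [a₂,d], [a₁,b₁][a₂,b₂], [c,d], and b₁b₂ is infinite cyclic, generated by the image of a₂; in particular the images of a₁, b₁, b₂, c, d are all trivial in this group. -/

import Mathlib

/-!
For every integer m, the group presented on a₁, b₁, a₂, b₂, c, d with relators
a₁⁻¹[b₁⁻¹,d⁻¹], b₁⁻¹[a₁⁻¹,d], c⁻¹[b₂⁻¹,d⁻¹], d·[c⁻¹,b₂]^m, [a₁,c], [b₁,c], [a₂,c],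
[a₂,d], [a₁,b₁][a₂,b₂], [c,d], b₁b₂ is infinite cyclic, generated by the image of a₂;
in particular the images of a₁, b₁, b₂, c, d are all trivial.
Generators: a₁ = 0, b₁ = 1, a₂ = 2, b₂ = 3, c = 4, d = 5.
Here [x,y] = x y x⁻¹ y⁻¹.
-/

namespace Stmt10

def a₁ : FreeGroup (Fin 6) := FreeGroup.of 0
def b₁ : FreeGroup (Fin 6) := FreeGroup.of 1
def a₂ : FreeGroup (Fin 6) := FreeGroup.of 2
def b₂ : FreeGroup (Fin 6) := FreeGroup.of 3
def c : FreeGroup (Fin 6) := FreeGroup.of 4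
def d : FreeGroup (Fin 6) := FreeGroup.of 5

/-- The commutator [x, y] = x y x⁻¹ y⁻¹. -/
def comm (x y : FreeGroup (Fin 6)) : FreeGroup (Fin 6) := x * y * x⁻¹ * y⁻¹

def rels (m : ℤ) : Set (FreeGroup (Fin 6)) :=
  { a₁⁻¹ * comm b₁⁻¹ d⁻¹,
    b₁⁻¹ * comm a₁⁻¹ d,
    c⁻¹ * comm b₂⁻¹ d⁻¹,
    d * (comm c⁻¹ b₂) ^ m,
    comm a₁ c,
    comm b₁ c,
    comm a₂ c,
    comm a₂ d,
    comm a₁ b₁ * comm a₂ b₂,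
    comm c d,
    b₁ * b₂ }

/-!
Since `b₂ = b₁⁻¹` commutes with `c`, the commutator `[c⁻¹, b₂]` is trivial, so the relator
`d·[c⁻¹, b₂]^m` forces `d = 1`; the first three relators then give `a₁ = b₁ = c = 1`, and
`b₂ = b₁⁻¹ = 1`. Hence the group is generated by `a₂`, and it is infinite because every relator
has exponent sum zero in `a₂`.
-/

open scoped commutatorElement

theorem eq_one_of_relations {G : Type*} [Group G] {a b b' c d : G} {m : ℤ}
    (ha : a = ⁅b⁻¹, d⁻¹⁆) (hb : b = ⁅a⁻¹, d⁆) (hc : c = ⁅b'⁻¹, d⁻¹⁆)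
    (hd : d * ⁅c⁻¹, b'⁆ ^ m = 1) (hbc : ⁅b, c⁆ = 1) (hbb' : b * b' = 1) :
    a = 1 ∧ b = 1 ∧ b' = 1 ∧ c = 1 ∧ d = 1 := by
  have hb' : b' = b⁻¹ := eq_inv_of_mul_eq_one_right hbb'
  have hcb' : ⁅c⁻¹, b'⁆ = 1 := by
    rw [hb', commutatorElement_eq_one_iff_commute]
    exact (commutatorElement_eq_one_iff_commute.mp hbc).symm.inv_inv
  obtain rfl : d = 1 := by simpa [hcb'] using hd
  obtain rfl : a = 1 := by simpa using ha
  obtain rfl : b = 1 := by simpa using hb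
  exact ⟨rfl, rfl, by simpa using hb', by simpa using hc, rfl⟩

lemma mk_comm (m : ℤ) (x y : FreeGroup (Fin 6)) :
    PresentedGroup.mk (rels m) (comm x y) =
      ⁅PresentedGroup.mk (rels m) x, PresentedGroup.mk (rels m) y⁆ :=
  map_commutatorElement _ x y

theorem of_eq_one_of_ne_two (m : ℤ) :
    PresentedGroup.of (rels := rels m) 0 = 1 ∧
    PresentedGroup.of (rels := rels m) 1 = 1 ∧
    PresentedGroup.of (rels := rels m) 3 = 1 ∧
    PresentedGroup.of (rels := rels m) 4 = 1 ∧
    PresentedGroup.of (rels := rels m) 5 = 1 := by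
  have relation {r : FreeGroup (Fin 6)} (hr : r ∈ rels m) : PresentedGroup.mk (rels m) r = 1 :=
    PresentedGroup.one_of_mem hr
  have ha := relation (r := a₁⁻¹ * comm b₁⁻¹ d⁻¹) (by simp [rels])
  have hb := relation (r := b₁⁻¹ * comm a₁⁻¹ d) (by simp [rels])
  have hc := relation (r := c⁻¹ * comm b₂⁻¹ d⁻¹) (by simp [rels])
  have hd := relation (r := d * (comm c⁻¹ b₂) ^ m) (by simp [rels])
  have hbc := relation (r := comm b₁ c) (by simp [rels])
  have hbb := relation (r := b₁ * b₂) (by simp [rels])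
  simp only [map_mul, map_inv, map_zpow, mk_comm, inv_mul_eq_one] at ha hb hc hd hbc hbb
  exact eq_one_of_relations ha hb hc hd hbc hbb

theorem zpowers_of_two_eq_top (m : ℤ) :
    Subgroup.zpowers (PresentedGroup.of (rels := rels m) 2) = ⊤ := by
  obtain ⟨h0, h1, h3, h4, h5⟩ := of_eq_one_of_ne_two m
  refine (Subgroup.eq_top_iff' _).mpr fun x ↦ PresentedGroup.generated_by _ _ (fun i ↦ ?_) x
  fin_cases i <;> simp [h0, h1, h3, h4, h5]

def a₂ExponentSum (m : ℤ) : PresentedGroup (rels m) →* Multiplicative ℤ :=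
  PresentedGroup.toGroup (f := Pi.mulSingle 2 (Multiplicative.ofAdd 1)) <| by
    simp only [rels, Set.mem_insert_iff, Set.mem_singleton_iff]
    rintro r (rfl | rfl | rfl | rfl | rfl | rfl | rfl | rfl | rfl | rfl | rfl) <;>
      simp [comm, a₁, b₁, a₂, b₂, c, d]

theorem pi1_infinite_cyclic_gen_a₂ (m : ℤ) :
    Nonempty (PresentedGroup (rels m) ≃* Multiplicative ℤ) ∧
    Subgroup.zpowers (PresentedGroup.of (rels := rels m) 2) = ⊤ ∧
    (PresentedGroup.of (rels := rels m) 0 = 1 ∧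
     PresentedGroup.of (rels := rels m) 1 = 1 ∧
     PresentedGroup.of (rels := rels m) 3 = 1 ∧
     PresentedGroup.of (rels := rels m) 4 = 1 ∧
     PresentedGroup.of (rels := rels m) 5 = 1) := by
  have hsurj : Function.Surjective (a₂ExponentSum m) := fun n ↦
    ⟨PresentedGroup.of 2 ^ n.toAdd, by simp [a₂ExponentSum, ← ofAdd_zsmul]⟩
  have : Infinite (PresentedGroup (rels m)) := Infinite.of_surjective _ hsurj
  exact ⟨⟨(intEquivOfZPowersEqTop _ (zpowers_of_two_eq_top m)).symm⟩,
    zpowers_of_two_eq_top m, of_eq_one_of_ne_two m⟩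

end Stmt10
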